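/- Let f̃ : ℝ^p → ℝ be convex, ρ-strongly convex on a ball containing both θ̂ and θ⁺, where θ̂ is the global minimizer of f̃ and θ⁺ = prox_{λ⁻¹f̃}(θ_t) for some θ_t and λ > 0. Then ‖θ⁺ − θ̂‖_2 ≤ (λ/(ρ+λ)) ‖θ_t − θ̂‖_2. -/

import Mathlib

/-!
Both points carry a subgradient of `f`: `0` at the minimizer `θ̂` and `-λ (θ⁺ - θ_t)` at the
proximal point `θ⁺`. On a set where `f` is `ρ`-strongly convex, subgradients are `ρ`-strongly
monotone, so `ρ ‖θ⁺ - θ̂‖² ≤ ⟪-λ (θ⁺ - θ_t), θ⁺ - θ̂⟫ = -λ ‖θ⁺ - θ̂‖² + λ ⟪θ_t - θ̂, θ⁺ - θ̂⟫`.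
Cauchy–Schwarz then gives `(ρ + λ) ‖θ⁺ - θ̂‖ ≤ λ ‖θ_t - θ̂‖`.
-/

open scoped RealInnerProductSpace

lemma le_div_of_mul_sq_le_mul {b c x : ℝ} (hb : 0 ≤ b) (hc : 0 < c) (hx : 0 ≤ x)
    (h : c * x ^ 2 ≤ b * x) : x ≤ b / c := by
  rw [le_div_iff₀ hc]
  rcases hx.eq_or_lt with rfl | hx
  · simpa using hb
  · nlinarith

section Subgradient

variable {E : Type*} [NormedAddCommGroup E] [InnerProductSpace ℝ E]

def IsSubgradientWithin (f : E → ℝ) (s : Set E) (x u : E) : Prop :=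
  ∀ z ∈ s, f x + ⟪u, z - x⟫ ≤ f z

variable {f : E → ℝ} {s : Set E} {m : ℝ} {x y u v : E}

lemma StrongConvexOn.add_inner_add_mul_sq_le (hf : StrongConvexOn s m f) (hx : x ∈ s)
    (hy : y ∈ s) (hu : IsSubgradientWithin f s x u) :
    f x + ⟪u, y - x⟫ + m / 2 * ‖y - x‖ ^ 2 ≤ f y := by
  -- Test the subgradient at `x + t (y - x)` and let `t → 0`.
  have hsegment : ∀ t ∈ Set.Ioo (0 : ℝ) 1,
      f x + ⟪u, y - x⟫ + (1 - t) * (m / 2 * ‖y - x‖ ^ 2) ≤ f y := by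
    rintro t ⟨ht0, ht1⟩
    have hconv := hf.2 hx hy (sub_nonneg.2 ht1.le) ht0.le (sub_add_cancel 1 t)
    have hsub := hu _ (hf.1 hx hy (sub_nonneg.2 ht1.le) ht0.le (sub_add_cancel 1 t))
    have hdir : (1 - t) • x + t • y - x = t • (y - x) := by module
    rw [hdir, real_inner_smul_right] at hsub
    rw [smul_eq_mul, smul_eq_mul, norm_sub_rev x y] at hconv
    nlinarith
  have hclosed : IsClosed {t : ℝ | f x + ⟪u, y - x⟫ + (1 - t) * (m / 2 * ‖y - x‖ ^ 2) ≤ f y} :=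
    isClosed_le (by fun_prop) continuous_const
  have hzero : (0 : ℝ) ∈ closure (Set.Ioo (0 : ℝ) 1) := by
    rw [closure_Ioo zero_ne_one]
    exact ⟨le_rfl, zero_le_one⟩
  simpa using hclosed.closure_subset_iff.2 hsegment hzero

lemma StrongConvexOn.mul_sq_le_inner_sub (hf : StrongConvexOn s m f) (hx : x ∈ s) (hy : y ∈ s)
    (hu : IsSubgradientWithin f s x u) (hv : IsSubgradientWithin f s y v) :
    m * ‖x - y‖ ^ 2 ≤ ⟪u - v, x - y⟫ := by
  have hxy := hf.add_inner_add_mul_sq_le hx hy hu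
  have hyx := hf.add_inner_add_mul_sq_le hy hx hv
  rw [norm_sub_rev y x] at hxy
  have hinner : ⟪u - v, x - y⟫ = -⟪u, y - x⟫ - ⟪v, x - y⟫ := by
    rw [inner_sub_left, ← inner_neg_right, neg_sub]
  linarith

end Subgradient

theorem prox_contraction_strongly_convex_general {p : ℕ}
    (f : EuclideanSpace ℝ (Fin p) → ℝ)
    (rho lam R : ℝ) (hrho : 0 < rho) (hlam : 0 < lam)
    (thetaHat thetaT thetaPlus : EuclideanSpace ℝ (Fin p))
    (hsc : StrongConvexOn (Metric.closedBall thetaHat R) rho f)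
    (hHat_mem : thetaHat ∈ Metric.closedBall thetaHat R)
    (hPlus_mem : thetaPlus ∈ Metric.closedBall thetaHat R)
    -- θ̂ is the global minimizer (first-order condition 0 ∈ ∂f(θ̂))
    (hmin : ∀ x, f thetaHat ≤ f x)
    -- θ⁺ = prox_{λ⁻¹ f}(θ_t): first-order condition −λ(θ⁺ − θ_t) ∈ ∂f(θ⁺)
    (hsub : ∀ x, f thetaPlus + ⟪(-lam) • (thetaPlus - thetaT), x - thetaPlus⟫ ≤ f x) :
    ‖thetaPlus - thetaHat‖ ≤ lam / (rho + lam) * ‖thetaT - thetaHat‖ := by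
  have hHat : IsSubgradientWithin f (Metric.closedBall thetaHat R) thetaHat 0 :=
    fun z _ ↦ by simpa using hmin z
  have hPlus : IsSubgradientWithin f (Metric.closedBall thetaHat R) thetaPlus
      ((-lam) • (thetaPlus - thetaT)) := fun z _ ↦ hsub z
  have hmono := hsc.mul_sq_le_inner_sub hPlus_mem hHat_mem hPlus hHat
  have hinner : ⟪(-lam) • (thetaPlus - thetaT) - 0, thetaPlus - thetaHat⟫ =
      lam * ⟪thetaT - thetaHat, thetaPlus - thetaHat⟫ - lam * ‖thetaPlus - thetaHat‖ ^ 2 := by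
    rw [sub_zero, ← sub_sub_sub_cancel_right thetaPlus thetaT thetaHat, real_inner_smul_left,
      inner_sub_left, real_inner_self_eq_norm_sq]
    ring
  have hcs := real_inner_le_norm (thetaT - thetaHat) (thetaPlus - thetaHat)
  have hkey : (rho + lam) * ‖thetaPlus - thetaHat‖ ^ 2 ≤
      lam * ‖thetaT - thetaHat‖ * ‖thetaPlus - thetaHat‖ := by
    nlinarith
  rw [div_mul_eq_mul_div]
  exact le_div_of_mul_sq_le_mul (by positivity) (by positivity) (norm_nonneg _) hkey

/-- Contraction of the proximal point towards the minimizer under strong convexity. -/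
theorem prox_contraction_strongly_convex {p : ℕ}
    (f : EuclideanSpace ℝ (Fin p) → ℝ) (hconv : ConvexOn ℝ Set.univ f)
    (rho lam R : ℝ) (hrho : 0 < rho) (hlam : 0 < lam) (hR : 0 < R)
    (thetaHat thetaT thetaPlus : EuclideanSpace ℝ (Fin p))
    (hsc : StrongConvexOn (Metric.closedBall thetaHat R) rho f)
    (hHat_mem : thetaHat ∈ Metric.closedBall thetaHat R)
    (hPlus_mem : thetaPlus ∈ Metric.closedBall thetaHat R)
    -- θ̂ is the global minimizer (first-order condition 0 ∈ ∂f(θ̂))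
    (hmin : ∀ x, f thetaHat ≤ f x)
    -- θ⁺ = prox_{λ⁻¹ f}(θ_t): first-order condition −λ(θ⁺ − θ_t) ∈ ∂f(θ⁺)
    (hsub : ∀ x, f thetaPlus + ⟪(-lam) • (thetaPlus - thetaT), x - thetaPlus⟫ ≤ f x)
    (hprox : ∀ x, f thetaPlus + lam / 2 * ‖thetaPlus - thetaT‖ ^ 2 ≤
      f x + lam / 2 * ‖x - thetaT‖ ^ 2) :
    ‖thetaPlus - thetaHat‖ ≤ lam / (rho + lam) * ‖thetaT - thetaHat‖ :=
  prox_contraction_strongly_convex_general f rho lam R hrho hlam thetaHat thetaT thetaPlus hsc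
    hHat_mem hPlus_mem hmin hsub
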